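/- arXiv:2403.09351 — 5 statements merged into one kernel-verified Lean document; each statement's English description precedes it below -/
import Mathlib

section
/- The variance of the aggregated genuine frequency satisfies Var[f̃_X̃(v)] = q(1 − q)/(n (p − q)²) + f_X(v)(1 − p − q)/(n (p − q)) for every item v ∈ D, provided the perturbed reports X̃₁,…,X̃ₙ are independent, where f_X(v) = |{i : xᵢ = v}|/n. (This is the variance σ_x̃² in Lemma 2 of the paper, instantiated for GRR.) -/
/-!
The indicator `𝟙[X̃ᵢ = v]` is a Bernoulli variable with parameter `rᵢ = p` if `xᵢ = v` and
`rᵢ = q` otherwise, so its variance is `rᵢ (1 - rᵢ)`. The estimator is an affine function of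
`∑ᵢ 𝟙[X̃ᵢ = v]` with slope `(n (p - q))⁻¹`, and by independence the variances add up to
`k p (1 - p) + (n - k) q (1 - q) = n q (1 - q) + k (p - q) (1 - p - q)`, where `k = n f_X(v)`.
-/

open MeasureTheory Real ProbabilityTheory Finset

lemma sum_ite_eq_card_smul_add {ι R : Type*} [AddCommGroup R] (s : Finset ι) (P : ι → Prop)
    [DecidablePred P] (a b : R) :
    ∑ i ∈ s, (if P i then a else b) = #s • b + #(s.filter P) • (a - b) := by
  rw [sum_ite, sum_const, sum_const, ← card_filter_add_card_filter_not P (s := s)]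
  simp only [add_smul, smul_sub]
  abel

section Indicators

variable {Ω α ι : Type*} [MeasurableSpace Ω] {μ : Measure Ω} [IsProbabilityMeasure μ]
  [MeasurableSpace α] [MeasurableSingletonClass α] [DecidableEq α]

lemma measurable_ite_eq_one_zero (a : α) :
    Measurable fun b : α ↦ if b = a then (1 : ℝ) else 0 :=
  measurable_const.ite (measurableSet_singleton a) measurable_const

lemma variance_const_mul_add_const {Y : Ω → ℝ} (hY : AEStronglyMeasurable Y μ) (c b : ℝ) :
    Var[fun ω ↦ c * Y ω + b; μ] = c ^ 2 * Var[Y; μ] := by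
  rw [variance_add_const (hY.const_mul c), variance_const_mul]

lemma variance_ite_eq_one_zero {Y : Ω → α} (hY : Measurable Y) (a : α) :
    Var[fun ω ↦ if Y ω = a then (1 : ℝ) else 0; μ]
      = μ.real {ω | Y ω = a} * (1 - μ.real {ω | Y ω = a}) := by
  have hs : MeasurableSet {ω | Y ω = a} := hY (measurableSet_singleton a)
  rw [variance_of_ae_eq_zero_or_one (measurable_const.ite hs measurable_const).aemeasurable
      (ae_of_all _ fun ω ↦ by split_ifs <;> simp),
    ← probReal_compl_eq_one_sub hs, mul_comm]
  congr 2 <;> ext ω <;> by_cases h : Y ω = a <;> simp [h]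

lemma variance_sum_ite_eq_one_zero [Fintype ι] {Y : ι → Ω → α} (hY : ∀ i, Measurable (Y i))
    (hindep : Pairwise fun i j ↦ Y i ⟂ᵢ[μ] Y j) (a : α) :
    Var[fun ω ↦ ∑ i, if Y i ω = a then (1 : ℝ) else 0; μ]
      = ∑ i, μ.real {ω | Y i ω = a} * (1 - μ.real {ω | Y i ω = a}) := by
  have hmemLp (i : ι) : MemLp (fun ω ↦ if Y i ω = a then (1 : ℝ) else 0) 2 μ :=
    MemLp.of_bound ((measurable_ite_eq_one_zero a).comp (hY i)).aestronglyMeasurable 1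
      (ae_of_all _ fun ω ↦ by split_ifs <;> simp)
  have hsum := IndepFun.variance_sum (s := univ) (fun i _ ↦ hmemLp i) fun i _ j _ hij ↦
    (hindep hij).comp (measurable_ite_eq_one_zero a) (measurable_ite_eq_one_zero a)
  rw [sum_fn] at hsum
  simpa only [variance_ite_eq_one_zero (hY _)] using hsum

lemma variance_mean_debiased_ite_eq_one_zero [Fintype ι] {Y : ι → Ω → α}
    (hY : ∀ i, Measurable (Y i)) (hindep : Pairwise fun i j ↦ Y i ⟂ᵢ[μ] Y j) (a : α) (p q : ℝ) :
    Var[fun ω ↦ (1 / (Fintype.card ι : ℝ)) *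
        ∑ i, ((if Y i ω = a then (1 : ℝ) else 0) - q) / (p - q); μ]
      = ((Fintype.card ι : ℝ)⁻¹ * (p - q)⁻¹) ^ 2 *
          ∑ i, μ.real {ω | Y i ω = a} * (1 - μ.real {ω | Y i ω = a}) := by
  set N : ℝ := (Fintype.card ι : ℝ)
  have haffine : (fun ω ↦ (1 / N) * ∑ i, ((if Y i ω = a then (1 : ℝ) else 0) - q) / (p - q))
      = fun ω ↦ N⁻¹ * (p - q)⁻¹ * (∑ i, if Y i ω = a then (1 : ℝ) else 0)
          + -(N⁻¹ * N * q * (p - q)⁻¹) := by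
    funext ω
    rw [← sum_div, sum_sub_distrib, sum_const, card_univ, nsmul_eq_mul]
    ring
  have hmeas : Measurable fun ω ↦ ∑ i, if Y i ω = a then (1 : ℝ) else 0 :=
    measurable_sum _ fun i _ ↦ (measurable_ite_eq_one_zero a).comp (hY i)
  rw [haffine, variance_const_mul_add_const hmeas.aestronglyMeasurable,
    variance_sum_ite_eq_one_zero hY hindep]

end Indicators

theorem genuine_frequency_variance_general
    (d : ℕ) (ε : ℝ)
    (p q : ℝ) (hp : p = Real.exp ε / (d - 1 + Real.exp ε))
    (hq : q = 1 / (d - 1 + Real.exp ε))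
    {Ω : Type*} [MeasurableSpace Ω] (μ : Measure Ω) [IsProbabilityMeasure μ]
    (n : ℕ)
    (x : Fin n → Fin d)
    (X : Fin n → Ω → Fin d) (hXmeas : ∀ i, Measurable (X i))
    (hXlaw : ∀ i, ∀ b : Fin d,
      μ {ω | X i ω = b} = ENNReal.ofReal (if b = x i then p else q))
    (hXindep : iIndepFun X μ)
    (v : Fin d)
    (fX : ℝ) (hfX : fX = ((Finset.univ.filter (fun i => x i = v)).card : ℝ) / n) :
    variance (fun ω => (1 / (n : ℝ)) *
        ∑ i : Fin n, ((if X i ω = v then (1 : ℝ) else 0) - q) / (p - q)) μ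
      = q * (1 - q) / (n * (p - q) ^ 2) + fX * (1 - p - q) / (n * (p - q)) := by
  have hden : 0 < (d : ℝ) - 1 + exp ε := by
    have : (1 : ℝ) ≤ d := Nat.one_le_cast.2 v.pos
    linarith [exp_pos ε]
  have hlaw (i : Fin n) : μ.real {ω | X i ω = v} = if x i = v then p else q := by
    rw [measureReal_def, hXlaw, ENNReal.toReal_ofReal (by split_ifs <;> subst_vars <;> positivity)]
    simp only [eq_comm]
  have hterm (i : Fin n) : μ.real {ω | X i ω = v} * (1 - μ.real {ω | X i ω = v})
      = if x i = v then p * (1 - p) else q * (1 - q) := by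
    rw [hlaw]; split_ifs <;> rfl
  have hvar := variance_mean_debiased_ite_eq_one_zero hXmeas
    (fun i j hij ↦ hXindep.indepFun hij) v p q (μ := μ)
  rw [Fintype.card_fin, sum_congr rfl fun i _ ↦ hterm i, sum_ite_eq_card_smul_add, card_univ,
    Fintype.card_fin, nsmul_eq_mul, nsmul_eq_mul] at hvar
  -- `a⁻¹ * a * a⁻¹ = a⁻¹` holds also for `a = 0`, so `n = 0` and `p = q` need no separate case.
  have hn : (n : ℝ)⁻¹ * n * (n : ℝ)⁻¹ = (n : ℝ)⁻¹ := by simpa using mul_inv_mul_cancel (n : ℝ)⁻¹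
  have hpq : (p - q)⁻¹ * (p - q) * (p - q)⁻¹ = (p - q)⁻¹ := by
    simpa using mul_inv_mul_cancel (p - q)⁻¹
  rw [hvar, hfX]
  simp only [div_eq_mul_inv, mul_inv, ← inv_pow]
  linear_combination ((p - q)⁻¹ ^ 2 * (q * (1 - q))) * hn
    + (#(univ.filter fun i ↦ x i = v) * (n : ℝ)⁻¹ ^ 2 * (1 - p - q)) * hpq

/-- variance of the aggregated genuine frequency under GRR. -/
theorem genuine_frequency_variance
    (d : ℕ) (hd : 2 ≤ d) (ε : ℝ) (hε : 0 < ε)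
    (p q : ℝ) (hp : p = Real.exp ε / (d - 1 + Real.exp ε))
    (hq : q = 1 / (d - 1 + Real.exp ε))
    {Ω : Type*} [MeasurableSpace Ω] (μ : Measure Ω) [IsProbabilityMeasure μ]
    (n : ℕ) (hn : 1 ≤ n)
    (x : Fin n → Fin d)
    (X : Fin n → Ω → Fin d) (hXmeas : ∀ i, Measurable (X i))
    (hXlaw : ∀ i, ∀ b : Fin d,
      μ {ω | X i ω = b} = ENNReal.ofReal (if b = x i then p else q))
    (hXindep : iIndepFun X μ)
    (v : Fin d)
    (fX : ℝ) (hfX : fX = ((Finset.univ.filter (fun i => x i = v)).card : ℝ) / n) :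
    variance (fun ω => (1 / (n : ℝ)) *
        ∑ i : Fin n, ((if X i ω = v then (1 : ℝ) else 0) - q) / (p - q)) μ
      = q * (1 - q) / (n * (p - q) ^ 2) + fX * (1 - p - q) / (n * (p - q)) :=
  genuine_frequency_variance_general d ε p q hp hq μ n x X hXmeas hXlaw hXindep v fX hfX
end

section
/- (Theorem 2, unbiasedness of the genuine frequency estimator.) Suppose each genuine report X̃ᵢ satisfies Pr[X̃ᵢ = xᵢ] = p and Pr[X̃ᵢ = b] = q for b ≠ xᵢ. Let η = m/n. Then for every item v ∈ D, the recovery estimator (1+η)·f̃_Z(v) − η·f̃_Y(v) has expectation equal to the true genuine frequency: E[(1+η)·f̃_Z(v) − η·f̃_Y(v)] = f_X(v), where f_X(v) = |{i : xᵢ = v}|/n. -/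
open MeasureTheory Real

/-! The coefficients `1 + η` and `η` are chosen so that the malicious reports cancel exactly,
leaving the average of the genuine debiased indicators `(𝟙[X̃ᵢ = v] - q) / (p - q)`.
Each of these has expectation `𝟙[xᵢ = v]` because `X̃ᵢ = v` has probability `p` or `q`
according as `xᵢ = v` or not. -/

lemma recovery_combination_eq {n m : ℝ} (hn : 0 < n) (hm : 0 < m) (A B : ℝ) :
    (1 + m / n) * (1 / (n + m) * (A + B)) - m / n * (1 / m * B) = 1 / n * A := by
  field_simp
  ring

lemma grr_q_pos_and_lt_p (d : ℕ) {ε : ℝ} (hε : 0 < ε) :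
    0 < 1 / (d - 1 + exp ε) ∧ 1 / (d - 1 + exp ε) < exp ε / (d - 1 + exp ε) := by
  have hexp : 1 < exp ε := one_lt_exp_iff.mpr hε
  have hden : 0 < (d : ℝ) - 1 + exp ε := by
    have : (0 : ℝ) ≤ d := d.cast_nonneg
    linarith
  exact ⟨by positivity, div_lt_div_of_pos_right hexp hden⟩

lemma ite_eq_one_zero_eq_indicator {Ω α : Type*} [DecidableEq α] (X : Ω → α) (v : α) :
    (fun ω => if X ω = v then (1 : ℝ) else 0) = (X ⁻¹' {v}).indicator 1 := by
  ext ω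
  by_cases h : X ω = v <;> simp [h]

section Indicator

variable {Ω α : Type*} [MeasurableSpace Ω] [MeasurableSpace α] [MeasurableSingletonClass α]
  [DecidableEq α] {μ : Measure Ω} {X : Ω → α}

lemma integrable_ite_eq_one_zero [IsFiniteMeasure μ] (hX : Measurable X) (v : α) :
    Integrable (fun ω => if X ω = v then (1 : ℝ) else 0) μ := by
  rw [ite_eq_one_zero_eq_indicator]
  exact (integrable_const 1).indicator (hX (measurableSet_singleton v))

lemma integral_ite_eq_one_zero (hX : Measurable X) (v : α) :
    ∫ ω, (if X ω = v then (1 : ℝ) else 0) ∂μ = μ.real {ω | X ω = v} := by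
  rw [ite_eq_one_zero_eq_indicator, integral_indicator_one (hX (measurableSet_singleton v))]
  rfl

lemma integral_debiased_indicator [IsProbabilityMeasure μ] (hX : Measurable X) {a v : α}
    {p q : ℝ} (hp : 0 ≤ p) (hq : 0 ≤ q) (hpq : p ≠ q)
    (hlaw : μ {ω | X ω = v} = ENNReal.ofReal (if v = a then p else q)) :
    ∫ ω, ((if X ω = v then (1 : ℝ) else 0) - q) / (p - q) ∂μ = if a = v then 1 else 0 := by
  have hprob : μ.real {ω | X ω = v} = if v = a then p else q := by
    rw [measureReal_def, hlaw, ENNReal.toReal_ofReal (by split_ifs <;> assumption)]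
  rw [integral_div, integral_sub (integrable_ite_eq_one_zero hX v) (integrable_const q),
    integral_const, integral_ite_eq_one_zero hX, hprob]
  rcases eq_or_ne a v with rfl | hav
  · simp [sub_ne_zero.mpr hpq]
  · simp [hav, hav.symm]

end Indicator

theorem recovery_estimator_unbiased_general
    (d : ℕ) (ε : ℝ) (hε : 0 < ε)
    (p q : ℝ) (hp : p = Real.exp ε / (d - 1 + Real.exp ε))
    (hq : q = 1 / (d - 1 + Real.exp ε))
    {Ω : Type*} [MeasurableSpace Ω] (μ : Measure Ω) [IsProbabilityMeasure μ]
    (n m : ℕ) (hn : 1 ≤ n) (hm : 1 ≤ m)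
    (x : Fin n → Fin d)
    (X : Fin n → Ω → Fin d) (hXmeas : ∀ i, Measurable (X i))
    (hXlaw : ∀ i, ∀ b : Fin d,
      μ {ω | X i ω = b} = ENNReal.ofReal (if b = x i then p else q))
    (Y : Fin m → Ω → Fin d)
    (v : Fin d)
    (η : ℝ) (hη : η = (m : ℝ) / n) :
    ∫ ω,
        ((1 + η) *
          ((1 / ((n : ℝ) + m)) *
            ((∑ i : Fin n, ((if X i ω = v then (1 : ℝ) else 0) - q) / (p - q)) +
             (∑ j : Fin m, ((if Y j ω = v then (1 : ℝ) else 0) - q) / (p - q))))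
         - η *
          ((1 / (m : ℝ)) *
            ∑ j : Fin m, ((if Y j ω = v then (1 : ℝ) else 0) - q) / (p - q))) ∂μ
      = ((Finset.univ.filter (fun i => x i = v)).card : ℝ) / n := by
  have ⟨hq_pos, hq_lt_p⟩ : 0 < q ∧ q < p := by rw [hp, hq]; exact grr_q_pos_and_lt_p d hε
  have hn_pos : (0 : ℝ) < n := by exact_mod_cast hn
  have hm_pos : (0 : ℝ) < m := by exact_mod_cast hm
  have hunbiased (i : Fin n) :=
    integral_debiased_indicator (hXmeas i) (hq_pos.trans hq_lt_p).le hq_pos.le hq_lt_p.ne'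
      (hXlaw i v)
  have hintegrable (i : Fin n) :
      Integrable (fun ω => ((if X i ω = v then (1 : ℝ) else 0) - q) / (p - q)) μ :=
    ((integrable_ite_eq_one_zero (hXmeas i) v).sub (integrable_const q)).div_const _
  simp only [hη, recovery_combination_eq hn_pos hm_pos]
  rw [integral_const_mul, integral_finsetSum _ fun i _ => hintegrable i]
  simp only [hunbiased, Finset.sum_boole]
  ring

/-- Theorem 2: unbiasedness of the genuine frequency estimator. -/
theorem recovery_estimator_unbiased
    (d : ℕ) (hd : 2 ≤ d) (ε : ℝ) (hε : 0 < ε)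
    (p q : ℝ) (hp : p = Real.exp ε / (d - 1 + Real.exp ε))
    (hq : q = 1 / (d - 1 + Real.exp ε))
    {Ω : Type*} [MeasurableSpace Ω] (μ : Measure Ω) [IsProbabilityMeasure μ]
    (n m : ℕ) (hn : 1 ≤ n) (hm : 1 ≤ m)
    (x : Fin n → Fin d)
    (X : Fin n → Ω → Fin d) (hXmeas : ∀ i, Measurable (X i))
    (hXlaw : ∀ i, ∀ b : Fin d,
      μ {ω | X i ω = b} = ENNReal.ofReal (if b = x i then p else q))
    (Y : Fin m → Ω → Fin d) (hYmeas : ∀ j, Measurable (Y j))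
    (v : Fin d)
    (η : ℝ) (hη : η = (m : ℝ) / n) :
    ∫ ω,
        ((1 + η) *
          ((1 / ((n : ℝ) + m)) *
            ((∑ i : Fin n, ((if X i ω = v then (1 : ℝ) else 0) - q) / (p - q)) +
             (∑ j : Fin m, ((if Y j ω = v then (1 : ℝ) else 0) - q) / (p - q))))
         - η *
          ((1 / (m : ℝ)) *
            ∑ j : Fin m, ((if Y j ω = v then (1 : ℝ) else 0) - q) / (p - q))) ∂μ
      = ((Finset.univ.filter (fun i => x i = v)).card : ℝ) / n :=
  recovery_estimator_unbiased_general d ε hε p q hp hq μ n m hn hm x X hXmeas hXlaw Y v η hη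
end

section
/- (Theorem 3, variance of the genuine frequency estimator.) Suppose the genuine reports X̃₁,…,X̃ₙ are independent, each satisfying Pr[X̃ᵢ = xᵢ] = p and Pr[X̃ᵢ = b] = q for b ≠ xᵢ. Let η = m/n. Then for every item v ∈ D, the recovery estimator (1+η)·f̃_Z(v) − η·f̃_Y(v) has variance Var[(1+η)·f̃_Z(v) − η·f̃_Y(v)] = σ_x̃², where σ_x̃² = q(1 − q)/(n(p − q)²) + f_X(v)(1 − p − q)/(n(p − q)) and f_X(v) = |{i : xᵢ = v}|/n. -/
/-!
The malicious reports cancel exactly: with `η = m / n`, `(1 + η) f̃_Z(v) - η f̃_Y(v)` is pointwise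
the genuine estimate `(1/n) ∑ᵢ (𝟙[X̃ᵢ = v] - q) / (p - q)`. Its summands are independent affine
images of Bernoulli variables with success probability `p` for the `n f_X(v)` users holding `v`
and `q` for the others, so the variance is
`(n f_X(v) p (1 - p) + (n - n f_X(v)) q (1 - q)) / (n (p - q))²`, and
`p (1 - p) - q (1 - q) = (p - q) (1 - p - q)` puts it in the stated form.
-/

open MeasureTheory Real ProbabilityTheory

open Finset in
theorem Finset.sum_ite_eq_card_filter_mul {ι R : Type*} [CommRing R] (s : Finset ι)
    (P : ι → Prop) [DecidablePred P] (a b : R) :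
    ∑ i ∈ s, (if P i then a else b) = #(s.filter P) * a + (#s - #(s.filter P)) * b := by
  rw [sum_ite, sum_const, sum_const, nsmul_eq_mul, nsmul_eq_mul,
    ← card_filter_add_card_filter_not (s := s) P]
  push_cast
  ring

section GRR

variable {Ω α : Type*} [MeasurableSpace Ω] [MeasurableSpace α] [MeasurableSingletonClass α]
  [DecidableEq α] {μ : Measure Ω} [IsProbabilityMeasure μ]

/-- The unbiased GRR estimate of `𝟙[x = v]` computed from one perturbed report `b` of `x`. -/
noncomputable def grrDebias (p q : ℝ) (v b : α) : ℝ := ((if b = v then 1 else 0) - q) / (p - q)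

lemma measurable_grrDebias (p q : ℝ) (v : α) : Measurable (grrDebias p q v) :=
  ((Measurable.ite (measurableSet_singleton v) measurable_const measurable_const).sub_const
    q).div_const _

lemma memLp_grrDebias_comp (p q : ℝ) (v : α) {X : Ω → α} (hX : Measurable X) :
    MemLp (fun ω => grrDebias p q v (X ω)) 2 μ := by
  refine .of_bound ((measurable_grrDebias p q v).comp hX).aestronglyMeasurable
    ((|1 - q| + |q|) / |p - q|) (ae_of_all _ fun ω => ?_)
  by_cases h : X ω = v <;> simp only [grrDebias, h, if_true, if_false, Real.norm_eq_abs, abs_div,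
    zero_sub, abs_neg] <;> gcongr <;> simp

lemma variance_grrDebias_comp (p q : ℝ) (v : α) {X : Ω → α} (hX : Measurable X) :
    Var[fun ω => grrDebias p q v (X ω); μ]
      = μ.real {ω | X ω = v} * (1 - μ.real {ω | X ω = v}) / (p - q) ^ 2 := by
  have hA : MeasurableSet {ω | X ω = v} := hX (measurableSet_singleton v)
  have hind : Measurable fun ω => if X ω = v then (1 : ℝ) else 0 :=
    Measurable.ite hA measurable_const measurable_const
  simp_rw [grrDebias, div_eq_mul_inv]
  rw [variance_mul_const, variance_sub_const hind.aestronglyMeasurable,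
    variance_of_ae_eq_zero_or_one hind.aemeasurable (ae_of_all _ fun ω => by split_ifs <;> simp)]
  simp only [ite_eq_right_iff, one_ne_zero, imp_false, ite_eq_left_iff, zero_ne_one,
    Decidable.not_not, inv_pow]
  rw [← Set.compl_ofPred, measureReal_compl hA, probReal_univ]
  ring

lemma variance_sum_grrDebias_comp {ι : Type*} (p q : ℝ) (v : α) (s : Finset ι)
    {X : ι → Ω → α} (hX : ∀ i, Measurable (X i)) (hindep : iIndepFun X μ) :
    Var[fun ω => ∑ i ∈ s, grrDebias p q v (X i ω); μ]
      = ∑ i ∈ s, μ.real {ω | X i ω = v} * (1 - μ.real {ω | X i ω = v}) / (p - q) ^ 2 := by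
  have hpair : Set.Pairwise ↑s fun i j =>
      IndepFun (grrDebias p q v ∘ X i) (grrDebias p q v ∘ X j) μ := fun i _ j _ hij =>
    (hindep.indepFun hij).comp (measurable_grrDebias p q v) (measurable_grrDebias p q v)
  rw [← Finset.sum_fn, IndepFun.variance_sum (fun i _ => memLp_grrDebias_comp p q v (hX i)) hpair]
  exact Finset.sum_congr rfl fun i _ => variance_grrDebias_comp p q v (hX i)

end GRR

lemma recovery_estimator_eq {n m : ℝ} (hn : n ≠ 0) (hm : m ≠ 0) (hnm : n + m ≠ 0) (a b : ℝ) :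
    (1 + m / n) * (1 / (n + m) * (a + b)) - m / n * (1 / m * b) = n⁻¹ * a := by
  field_simp
  ring

lemma grr_denom_pos (d : ℕ) {ε : ℝ} (hε : 0 < ε) : 0 < (d : ℝ) - 1 + exp ε := by
  have : 1 < exp ε := one_lt_exp_iff.2 hε
  linarith [(Nat.cast_nonneg d : (0 : ℝ) ≤ d)]


theorem recovery_estimator_variance_general
    (d : ℕ) (ε : ℝ) (hε : 0 < ε)
    (p q : ℝ) (hp : p = Real.exp ε / (d - 1 + Real.exp ε))
    (hq : q = 1 / (d - 1 + Real.exp ε))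
    {Ω : Type*} [MeasurableSpace Ω] (μ : Measure Ω) [IsProbabilityMeasure μ]
    (n m : ℕ) (hn : 1 ≤ n) (hm : 1 ≤ m)
    (x : Fin n → Fin d)
    (X : Fin n → Ω → Fin d) (hXmeas : ∀ i, Measurable (X i))
    (hXlaw : ∀ i, ∀ b : Fin d,
      μ {ω | X i ω = b} = ENNReal.ofReal (if b = x i then p else q))
    (hXindep : iIndepFun X μ)
    (Y : Fin m → Ω → Fin d)
    (v : Fin d)
    (η σx2 fX : ℝ) (hη : η = (m : ℝ) / n)
    (hfX : fX = ((Finset.univ.filter (fun i => x i = v)).card : ℝ) / n)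
    (hσx2 : σx2 = q * (1 - q) / (n * (p - q) ^ 2) + fX * (1 - p - q) / (n * (p - q))) :
    variance (fun ω =>
        (1 + η) *
          ((1 / ((n : ℝ) + m)) *
            ((∑ i : Fin n, ((if X i ω = v then (1 : ℝ) else 0) - q) / (p - q)) +
             (∑ j : Fin m, ((if Y j ω = v then (1 : ℝ) else 0) - q) / (p - q))))
         - η *
          ((1 / (m : ℝ)) *
            ∑ j : Fin m, ((if Y j ω = v then (1 : ℝ) else 0) - q) / (p - q))) μ
      = σx2 := by
  have hden := grr_denom_pos d hε
  have hq0 : 0 ≤ q := hq ▸ by positivity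
  have hqp : q < p := by rw [hp, hq]; gcongr; exact one_lt_exp_iff.2 hε
  have hn0 : (n : ℝ) ≠ 0 := by positivity
  have hestimator : ∀ a b : ℝ,
      (1 + η) * (1 / ((n : ℝ) + m) * (a + b)) - η * (1 / (m : ℝ) * b) = (n : ℝ)⁻¹ * a :=
    hη ▸ recovery_estimator_eq hn0 (by positivity) (by positivity)
  have hlaw : ∀ i, μ.real {ω | X i ω = v} = if x i = v then p else q := fun i => by
    rw [measureReal_def, hXlaw i v, ENNReal.toReal_ofReal (by split_ifs <;> linarith)]
    simp only [eq_comm]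
  simp_rw [hestimator, ← grrDebias.eq_1]
  rw [variance_const_mul, variance_sum_grrDebias_comp p q v _ hXmeas hXindep]
  simp_rw [hlaw, apply_ite (fun r => r * (1 - r) / (p - q) ^ 2)]
  rw [Finset.sum_ite_eq_card_filter_mul, Finset.card_univ, Fintype.card_fin, hσx2, hfX]
  have hpq : p - q ≠ 0 := sub_ne_zero.2 hqp.ne'
  field_simp
  ring

/-- Theorem 3: variance of the genuine frequency estimator. -/
theorem recovery_estimator_variance
    (d : ℕ) (hd : 2 ≤ d) (ε : ℝ) (hε : 0 < ε)
    (p q : ℝ) (hp : p = Real.exp ε / (d - 1 + Real.exp ε))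
    (hq : q = 1 / (d - 1 + Real.exp ε))
    {Ω : Type*} [MeasurableSpace Ω] (μ : Measure Ω) [IsProbabilityMeasure μ]
    (n m : ℕ) (hn : 1 ≤ n) (hm : 1 ≤ m)
    (x : Fin n → Fin d)
    (X : Fin n → Ω → Fin d) (hXmeas : ∀ i, Measurable (X i))
    (hXlaw : ∀ i, ∀ b : Fin d,
      μ {ω | X i ω = b} = ENNReal.ofReal (if b = x i then p else q))
    (hXindep : iIndepFun X μ)
    (Y : Fin m → Ω → Fin d) (hYmeas : ∀ j, Measurable (Y j))
    (v : Fin d)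
    (η σx2 fX : ℝ) (hη : η = (m : ℝ) / n)
    (hfX : fX = ((Finset.univ.filter (fun i => x i = v)).card : ℝ) / n)
    (hσx2 : σx2 = q * (1 - q) / (n * (p - q) ^ 2) + fX * (1 - p - q) / (n * (p - q))) :
    variance (fun ω =>
        (1 + η) *
          ((1 / ((n : ℝ) + m)) *
            ((∑ i : Fin n, ((if X i ω = v then (1 : ℝ) else 0) - q) / (p - q)) +
             (∑ j : Fin m, ((if Y j ω = v then (1 : ℝ) else 0) - q) / (p - q))))
         - η *
          ((1 / (m : ℝ)) *
            ∑ j : Fin m, ((if Y j ω = v then (1 : ℝ) else 0) - q) / (p - q))) μ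
      = σx2 :=
  recovery_estimator_variance_general d ε hε p q hp hq μ n m hn hm x X hXmeas hXlaw hXindep Y v η
    σx2 fX hη hfX hσx2
end

section
/- (Equation (31), KKT characterization of the refined frequencies — necessity.) Let D be a nonempty finite set and f̃ : D → ℝ. Let Δ = {g : D → ℝ | g(v) ≥ 0 for all v ∈ D and Σ_{v∈D} g(v) = 1}. If g* ∈ Δ minimizes the objective g ↦ Σ_{v∈D} (g(v) − f̃(v))² over Δ, and S = {v ∈ D | g*(v) > 0} is its support, then for every v ∈ S: g*(v) = f̃(v) − (Σ_{u∈S} f̃(u) − 1)/|S|. -/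
/-!
Write `r = g - f̃` for the residual of the minimizer. Moving mass `t ≤ g v` from a support point
`v` to any point `w` stays in the simplex and changes the objective by `2t (r w - r v) + O(t²)`,
so first-order optimality forces `r v ≤ r w`. Hence `r` is constant on the support `S`, and
summing `g = f̃ + r` over `S`, where `g` has total mass `1`, determines the constant.
-/

open Filter Topology Finset

theorem eq_div_card_of_forall_eq_add {ι : Type*} {S : Finset ι} (hS : S.Nonempty)
    {g f : ι → ℝ} {c : ℝ}
    (hc : ∀ u ∈ S, g u = f u + c) (hsum : ∑ u ∈ S, g u = 1) :
    c = (1 - ∑ u ∈ S, f u) / S.card := by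
  rw [sum_congr rfl hc, sum_add_distrib, sum_const, nsmul_eq_mul] at hsum
  have : (0 : ℝ) < S.card := by exact_mod_cast hS.card_pos
  field_simp
  linarith

theorem nonneg_of_forall_two_mul_add_sq_nonneg {a b δ : ℝ} (hδ : 0 < δ)
    (h : ∀ t, 0 < t → t < δ → 0 ≤ 2 * t * a + t ^ 2 * b) : 0 ≤ a := by
  have hlim : Tendsto (fun t => 2 * a + t * b) (𝓝[>] 0) (𝓝 (2 * a)) := by
    have : Continuous (fun t : ℝ => 2 * a + t * b) := by fun_prop
    simpa using (this.tendsto 0).mono_left nhdsWithin_le_nhds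
  have hev : ∀ᶠ t in 𝓝[>] (0 : ℝ), 0 ≤ 2 * a + t * b := by
    filter_upwards [Ioo_mem_nhdsGT hδ] with t ⟨ht0, htδ⟩
    have := h t ht0 htδ
    nlinarith
  linarith [ge_of_tendsto hlim hev]

section

variable {D : Type*} [Fintype D]

theorem sum_add_mul_sub_sq (g d f : D → ℝ) (t : ℝ) :
    ∑ u, (g u + t * d u - f u) ^ 2 =
      ∑ u, (g u - f u) ^ 2 + 2 * t * ∑ u, d u * (g u - f u) + t ^ 2 * ∑ u, d u ^ 2 := by
  simp only [mul_sum, ← sum_add_distrib]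
  exact sum_congr rfl fun u _ => by ring

theorem sum_mul_sub_nonneg_of_forall_le_add_mul {g d f : D → ℝ} {δ : ℝ} (hδ : 0 < δ)
    (hmin : ∀ t, 0 < t → t < δ →
      ∑ u, (g u - f u) ^ 2 ≤ ∑ u, (g u + t * d u - f u) ^ 2) :
    0 ≤ ∑ u, d u * (g u - f u) := by
  refine nonneg_of_forall_two_mul_add_sq_nonneg (b := ∑ u, d u ^ 2) hδ fun t ht0 htδ => ?_
  have := hmin t ht0 htδ
  rw [sum_add_mul_sub_sq] at this
  linarith

theorem add_mul_single_sub_single_mem_stdSimplex [DecidableEq D] {g : D → ℝ}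
    (hg : g ∈ stdSimplex ℝ D) (v w : D) {t : ℝ} (ht0 : 0 ≤ t) (htv : t ≤ g v) :
    (fun u => g u + t * (Pi.single w 1 - Pi.single v 1 : D → ℝ) u) ∈ stdSimplex ℝ D := by
  refine ⟨fun u => ?_, ?_⟩
  · by_cases huv : u = v
    · subst huv
      by_cases huw : u = w
      · subst huw; simpa using hg.1 u
      · simp [huw]; linarith
    · have : 0 ≤ (Pi.single w (1 : ℝ) : D → ℝ) u := by
        rw [Pi.single_apply]; split_ifs <;> norm_num
      simp only [Pi.sub_apply, Pi.single_eq_of_ne huv, sub_zero]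
      exact add_nonneg (hg.1 u) (mul_nonneg ht0 this)
  · simp [sum_add_distrib, ← mul_sum, hg.2]

theorem sub_le_sub_of_isMinOn_stdSimplex {f g : D → ℝ} (hg : g ∈ stdSimplex ℝ D)
    (hmin : IsMinOn (fun h : D → ℝ => ∑ u, (h u - f u) ^ 2) (stdSimplex ℝ D) g)
    {v : D} (hv : 0 < g v) (w : D) : g v - f v ≤ g w - f w := by
  classical
  have hdir := sum_mul_sub_nonneg_of_forall_le_add_mul (d := Pi.single w 1 - Pi.single v 1) hv
    fun t ht0 htv =>
      isMinOn_iff.1 hmin _ (add_mul_single_sub_single_mem_stdSimplex hg v w ht0.le htv.le)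
  simpa [sub_mul, sum_sub_distrib, Pi.single_apply] using hdir

end

theorem refined_frequency_kkt_necessity_general
    {D : Type*} [Fintype D] (ftil : D → ℝ)
    (g : D → ℝ)
    (hmem : (∀ v, 0 ≤ g v) ∧ ∑ v, g v = 1)
    (hmin : ∀ h : D → ℝ, ((∀ v, 0 ≤ h v) ∧ ∑ v, h v = 1) →
      ∑ v, (g v - ftil v) ^ 2 ≤ ∑ v, (h v - ftil v) ^ 2)
    (S : Finset D) (hS : S = Finset.univ.filter (fun v => 0 < g v)) :
    ∀ v ∈ S, g v = ftil v - ((∑ u ∈ S, ftil u) - 1) / S.card := by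
  intro v hv
  have hmin' : IsMinOn (fun h : D → ℝ => ∑ u, (h u - ftil u) ^ 2) (stdSimplex ℝ D) g :=
    isMinOn_iff.2 hmin
  have hpos : ∀ u ∈ S, 0 < g u := fun u hu => by simpa [hS] using hu
  have hconst : ∀ u ∈ S, g u = ftil u + (g v - ftil v) := fun u hu => by
    linarith [sub_le_sub_of_isMinOn_stdSimplex hmem hmin' (hpos u hu) v,
      sub_le_sub_of_isMinOn_stdSimplex hmem hmin' (hpos v hv) u]
  have hsum : ∑ u ∈ S, g u = 1 := by
    rw [← hmem.2, hS]
    exact sum_filter_of_ne fun u _ hu => (hmem.1 u).lt_of_ne' hu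
  have := eq_div_card_of_forall_eq_add ⟨v, hv⟩ hconst hsum
  rw [← neg_sub (1 : ℝ), neg_div, ← this]
  ring

/-- Equation (31): KKT characterization of the refined frequencies (necessity). -/
theorem refined_frequency_kkt_necessity
    {D : Type*} [Fintype D] [Nonempty D] (ftil : D → ℝ)
    (g : D → ℝ)
    (hmem : (∀ v, 0 ≤ g v) ∧ ∑ v, g v = 1)
    (hmin : ∀ h : D → ℝ, ((∀ v, 0 ≤ h v) ∧ ∑ v, h v = 1) →
      ∑ v, (g v - ftil v) ^ 2 ≤ ∑ v, (h v - ftil v) ^ 2)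
    (S : Finset D) (hS : S = Finset.univ.filter (fun v => 0 < g v)) :
    ∀ v ∈ S, g v = ftil v - ((∑ u ∈ S, ftil u) - 1) / S.card :=
  refined_frequency_kkt_necessity_general ftil g hmem hmin S hS
end

section
/- (Correctness of the refinement output of Algorithm 1 — sufficiency.) Let D be a nonempty finite set, f̃ : D → ℝ, and S a nonempty subset of D. Set μ' = (Σ_{u∈S} f̃(u) − 1)/|S| and define g : D → ℝ by g(v) = f̃(v) − μ' for v ∈ S and g(v) = 0 for v ∉ S. If f̃(v) − μ' ≥ 0 for every v ∈ S and f̃(v) − μ' ≤ 0 for every v ∉ S, then g lies in the probability simplex Δ = {h : D → ℝ | h(v) ≥ 0 for all v and Σ_v h(v) = 1} and g minimizes the objective h ↦ Σ_{v∈D} (h(v) − f̃(v))² over Δ. -/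
/-!
A point `g` of the simplex minimises `h ↦ ∑ (h v - f v)²` there as soon as the KKT conditions
hold: for some threshold `c`, `g - f ≥ c` everywhere, with equality on the support of `g`.
Indeed `∑ (h - g)(g - f) ≥ c ∑ h - c ∑ g = 0` for every `h` in the simplex, and expanding
`(h - f)² = (h - g)² + 2 (h - g)(g - f) + (g - f)²` gives optimality. The refined vector
satisfies these conditions with `c = -μ'`.
-/

open Finset

section

variable {ι : Type*} [Fintype ι]

theorem sum_sq_sub_le_of_sum_mul_sub_nonneg {f g h : ι → ℝ}
    (hcross : 0 ≤ ∑ i, (h i - g i) * (g i - f i)) :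
    ∑ i, (g i - f i) ^ 2 ≤ ∑ i, (h i - f i) ^ 2 := by
  have hexpand : ∑ i, (h i - f i) ^ 2
      = ∑ i, (h i - g i) ^ 2 + 2 * ∑ i, (h i - g i) * (g i - f i) + ∑ i, (g i - f i) ^ 2 := by
    rw [mul_sum, ← sum_add_distrib, ← sum_add_distrib]
    exact sum_congr rfl fun i _ => by ring
  have hsq : 0 ≤ ∑ i, (h i - g i) ^ 2 := sum_nonneg fun i _ => sq_nonneg _
  linarith

theorem sum_mul_sub_nonneg_of_kkt {f g h : ι → ℝ} {c : ℝ}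
    (hsum : ∑ i, h i = ∑ i, g i) (hh : ∀ i, 0 ≤ h i)
    (hlow : ∀ i, c ≤ g i - f i) (hsupp : ∀ i, g i ≠ 0 → g i - f i = c) :
    0 ≤ ∑ i, (h i - g i) * (g i - f i) := by
  have hg : ∑ i, g i * (g i - f i) = c * ∑ i, g i := by
    rw [mul_sum]
    refine sum_congr rfl fun i _ => ?_
    by_cases hi : g i = 0
    · simp [hi]
    · rw [hsupp i hi, mul_comm]
  have hlower : c * ∑ i, g i ≤ ∑ i, h i * (g i - f i) := by
    rw [← hsum, mul_sum]
    exact sum_le_sum fun i _ => by rw [mul_comm]; exact mul_le_mul_of_nonneg_left (hlow i) (hh i)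
  simp only [sub_mul, sum_sub_distrib]
  linarith

theorem isMinOn_sum_sq_sub_stdSimplex_of_kkt {f g : ι → ℝ} (hg : g ∈ stdSimplex ℝ ι) {c : ℝ}
    (hlow : ∀ i, c ≤ g i - f i) (hsupp : ∀ i, g i ≠ 0 → g i - f i = c) :
    IsMinOn (fun h => ∑ i, (h i - f i) ^ 2) (stdSimplex ℝ ι) g := fun _ hh =>
  sum_sq_sub_le_of_sum_mul_sub_nonneg <|
    sum_mul_sub_nonneg_of_kkt (hh.2.trans hg.2.symm) hh.1 hlow hsupp

end

theorem refined_frequency_sufficiency_general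
    {D : Type*} [Fintype D] [DecidableEq D] (ftil : D → ℝ)
    (S : Finset D) (hS : S.Nonempty)
    (μ' : ℝ) (hμ' : μ' = ((∑ u ∈ S, ftil u) - 1) / S.card)
    (g : D → ℝ) (hg : ∀ v, g v = if v ∈ S then ftil v - μ' else 0)
    (hpos : ∀ v ∈ S, 0 ≤ ftil v - μ')
    (hneg : ∀ v ∉ S, ftil v - μ' ≤ 0) :
    ((∀ v, 0 ≤ g v) ∧ ∑ v, g v = 1) ∧
    ∀ h : D → ℝ, ((∀ v, 0 ≤ h v) ∧ ∑ v, h v = 1) →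
      ∑ v, (g v - ftil v) ^ 2 ≤ ∑ v, (h v - ftil v) ^ 2 := by
  have hcard : (S.card : ℝ) ≠ 0 := by exact_mod_cast hS.card_pos.ne'
  have hsimplex : g ∈ stdSimplex ℝ D := by
    refine ⟨fun v => ?_, ?_⟩
    · rw [hg v]; split_ifs with hv
      exacts [hpos v hv, le_rfl]
    · rw [sum_congr rfl fun v _ => hg v, sum_ite_mem, univ_inter, sum_sub_distrib, sum_const,
        nsmul_eq_mul, hμ']
      field_simp
      ring
  refine ⟨hsimplex, fun h hh => isMinOn_sum_sq_sub_stdSimplex_of_kkt hsimplex (c := -μ')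
    (fun v => ?_) (fun v hv => ?_) hh⟩
  · by_cases hv : v ∈ S
    · simp [hg v, hv]
    · simpa [hg v, hv] using hneg v hv
  · have hv' : v ∈ S := by by_contra hv'; simp [hg v, hv'] at hv
    simp [hg v, hv']

/-- correctness of the refinement output of Algorithm 1 (sufficiency). -/
theorem refined_frequency_sufficiency
    {D : Type*} [Fintype D] [Nonempty D] [DecidableEq D] (ftil : D → ℝ)
    (S : Finset D) (hS : S.Nonempty)
    (μ' : ℝ) (hμ' : μ' = ((∑ u ∈ S, ftil u) - 1) / S.card)
    (g : D → ℝ) (hg : ∀ v, g v = if v ∈ S then ftil v - μ' else 0)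
    (hpos : ∀ v ∈ S, 0 ≤ ftil v - μ')
    (hneg : ∀ v ∉ S, ftil v - μ' ≤ 0) :
    ((∀ v, 0 ≤ g v) ∧ ∑ v, g v = 1) ∧
    ∀ h : D → ℝ, ((∀ v, 0 ≤ h v) ∧ ∑ v, h v = 1) →
      ∑ v, (g v - ftil v) ^ 2 ≤ ∑ v, (h v - ftil v) ^ 2 :=
  refined_frequency_sufficiency_general ftil S hS μ' hμ' g hg hpos hneg
end
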